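/- Let α ∈ (0,1) and let F and G be cumulative distribution functions with ∫_{−∞}^0 F(y) dy < ∞ and ∫_{−∞}^0 G(y) dy < ∞. Then 0 ≤ CVaR_α(G) − CVaR_α(F) + (1/α)∫_{−∞}^{VaR_α(F)} (G(y) − F(y)) dy ≤ (1/α) · (sup_y |F(y) − G(y)|) · |VaR_α(F) − VaR_α(G)|. -/

import Mathlib

open MeasureTheory

/-- A cumulative distribution function: nondecreasing, right-continuous,
tending to `0` at `−∞` and to `1` at `+∞`. -/
def IsCDF (F : ℝ → ℝ) : Prop :=
  Monotone F ∧ (∀ y : ℝ, ContinuousWithinAt F (Set.Ici y) y) ∧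
    Filter.Tendsto F Filter.atBot (nhds 0) ∧ Filter.Tendsto F Filter.atTop (nhds 1)

/-- Value-at-risk at level `α`: `VaR_α(F) = inf{ y : F y ≥ α }`. -/
noncomputable def VaR (α : ℝ) (F : ℝ → ℝ) : ℝ :=
  sInf {y : ℝ | α ≤ F y}

/-- Conditional value-at-risk at level `α`:
`CVaR_α(F) = VaR_α(F) − (1/α) ∫_{−∞}^{VaR_α(F)} F(y) dy`. -/
noncomputable def CVaR (α : ℝ) (F : ℝ → ℝ) : ℝ :=
  VaR α F - (1 / α) * ∫ y in Set.Iio (VaR α F), F y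

/-! Between the two quantiles `a = VaR_α(F)` and `b = VaR_α(G)` one of the CDFs is `≥ α` and the
other `< α`. The residual equals `(1/α) ∫_a^b (α − G)`, whose integrand therefore has the sign of
`b − a` and is dominated in absolute value by `|F − G|` there. -/

open Set intervalIntegral

lemma MeasureTheory.LocallyIntegrable.integrableOn_Iic_of_integrableOn_Iic {f : ℝ → ℝ}
    (hf : LocallyIntegrable f) {c : ℝ} (hc : IntegrableOn f (Iic c)) (x : ℝ) :
    IntegrableOn f (Iic x) :=
  (hc.union (hf.integrableOn_isCompact isCompact_Icc)).mono_set fun y (hy : y ≤ x) =>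
    (le_total y c).imp id fun hcy => ⟨hcy, hy⟩

lemma integral_mem_Icc_of_forall_Ioo {f : ℝ → ℝ} {a b M : ℝ} (hab : a ≤ b)
    (hf : IntervalIntegrable f volume a b) (h : ∀ y ∈ Ioo a b, f y ∈ Icc 0 M) :
    ∫ y in a..b, f y ∈ Icc 0 (M * (b - a)) := by
  constructor
  · simpa using integral_mono_on_of_le_Ioo hab intervalIntegrable_const hf fun y hy => (h y hy).1
  · simpa [mul_comm] using
      integral_mono_on_of_le_Ioo hab hf intervalIntegrable_const fun y hy => (h y hy).2

namespace IsCDF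

variable {F G : ℝ → ℝ} {α : ℝ}

lemma nonneg (hF : IsCDF F) (y : ℝ) : 0 ≤ F y :=
  hF.1.le_of_tendsto hF.2.2.1 y

lemma le_one (hF : IsCDF F) (y : ℝ) : F y ≤ 1 :=
  hF.1.ge_of_tendsto hF.2.2.2 y

lemma abs_sub_le_iSup (hF : IsCDF F) (hG : IsCDF G) (y : ℝ) :
    |F y - G y| ≤ ⨆ z, |F z - G z| := by
  refine le_ciSup (f := fun z => |F z - G z|) ⟨1, ?_⟩ y
  rintro _ ⟨z, rfl⟩
  exact abs_sub_le_iff.2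
    ⟨by linarith [hF.le_one z, hG.nonneg z], by linarith [hF.nonneg z, hG.le_one z]⟩

lemma bddBelow_VaR_set (hF : IsCDF F) (hα : 0 < α) : BddBelow {y | α ≤ F y} := by
  obtain ⟨z, hz⟩ := (hF.2.2.1.eventually (eventually_lt_nhds hα)).exists
  exact ⟨z, fun y hy => le_of_lt <| hF.1.reflect_lt (hz.trans_le hy)⟩

lemma lt_of_lt_VaR (hF : IsCDF F) (hα : 0 < α) {y : ℝ} (hy : y < VaR α F) : F y < α :=
  lt_of_not_ge fun h => (csInf_le (hF.bddBelow_VaR_set hα) h).not_gt hy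

lemma le_apply_VaR (hF : IsCDF F) (hα : α ∈ Ioo 0 1) : α ≤ F (VaR α F) := by
  obtain ⟨y, hy⟩ := (hF.2.2.2.eventually (eventually_gt_nhds hα.2)).exists
  have hne : {y | α ≤ F y}.Nonempty := ⟨y, hy.le⟩
  have hright : ∀ t ∈ Ioi (VaR α F), α ≤ F t := fun t ht => by
    obtain ⟨z, hz, hzt⟩ := (csInf_lt_iff (hF.bddBelow_VaR_set hα.1) hne).1 ht
    exact hz.trans (hF.1 hzt.le)
  exact ge_of_tendsto ((hF.2.1 _).mono_left (nhdsWithin_mono _ Ioi_subset_Ici_self))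
    (eventually_mem_nhdsWithin.mono hright)

lemma le_of_VaR_le (hF : IsCDF F) (hα : α ∈ Ioo 0 1) {y : ℝ} (hy : VaR α F ≤ y) : α ≤ F y :=
  (hF.le_apply_VaR hα).trans (hF.1 hy)

end IsCDF

lemma CVaR_sub_CVaR_add_integral_eq {F G : ℝ → ℝ} {α : ℝ} (hα : α ≠ 0)
    (hF : ∀ x, IntegrableOn F (Iic x)) (hG : ∀ x, IntegrableOn G (Iic x)) :
    CVaR α G - CVaR α F + (1 / α) * ∫ y in Iio (VaR α F), (G y - F y) =
      (1 / α) * ∫ y in VaR α F..VaR α G, (α - G y) := by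
  have hGab : IntervalIntegrable G volume (VaR α F) (VaR α G) :=
    intervalIntegrable_iff.2 <| (hG _).mono_set Ioc_subset_Iic_self
  have hIio : ∀ {f : ℝ → ℝ}, (∀ x, IntegrableOn f (Iic x)) → ∀ x, IntegrableOn f (Iio x) :=
    fun hf x => (hf x).mono_set Iio_subset_Iic_self
  rw [integral_sub (hIio hG _) (hIio hF _), intervalIntegral.integral_sub intervalIntegrable_const
    hGab, ← integral_Iio_sub_Iio' (hIio hG _) (hIio hG _), intervalIntegral.integral_const]
  unfold CVaR
  field_simp
  ring

/-- The CVaR residual bound: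
`0 ≤ CVaR_α(G) − CVaR_α(F) + (1/α)∫_{−∞}^{VaR_α(F)} (G − F)
   ≤ (1/α) · sup_y |F(y) − G(y)| · |VaR_α(F) − VaR_α(G)|`. -/
theorem CVaR_residual (α : ℝ) (hα : α ∈ Set.Ioo (0 : ℝ) 1)
    (F G : ℝ → ℝ) (hF : IsCDF F) (hG : IsCDF G)
    (hIntF : IntegrableOn F (Set.Iic (0 : ℝ)))
    (hIntG : IntegrableOn G (Set.Iic (0 : ℝ))) :
    0 ≤ CVaR α G - CVaR α F + (1 / α) * ∫ y in Set.Iio (VaR α F), (G y - F y) ∧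
      CVaR α G - CVaR α F + (1 / α) * ∫ y in Set.Iio (VaR α F), (G y - F y) ≤
        (1 / α) * (⨆ y : ℝ, |F y - G y|) * |VaR α F - VaR α G| := by
  rw [CVaR_sub_CVaR_add_integral_eq hα.1.ne'
    (hF.1.locallyIntegrable.integrableOn_Iic_of_integrableOn_Iic hIntF)
    (hG.1.locallyIntegrable.integrableOn_Iic_of_integrableOn_Iic hIntG), mul_assoc]
  have hM := fun y => abs_le.1 <| hF.abs_sub_le_iSup hG y
  have hα' : 0 ≤ 1 / α := one_div_nonneg.2 hα.1.le
  suffices ∫ y in VaR α F..VaR α G, (α - G y) ∈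
      Icc 0 ((⨆ y : ℝ, |F y - G y|) * |VaR α F - VaR α G|) from
    ⟨mul_nonneg hα' this.1, mul_le_mul_of_nonneg_left this.2 hα'⟩
  rcases le_total (VaR α F) (VaR α G) with hab | hba
  · rw [abs_sub_comm, abs_of_nonneg (sub_nonneg.2 hab)]
    refine integral_mem_Icc_of_forall_Ioo hab
      (intervalIntegrable_const.sub hG.1.intervalIntegrable) fun y hy => ?_
    have hFy := hF.le_of_VaR_le hα hy.1.le
    have hGy := hG.lt_of_lt_VaR hα.1 hy.2
    constructor <;> linarith [hM y]
  · rw [abs_of_nonneg (sub_nonneg.2 hba), integral_symm, ← intervalIntegral.integral_neg]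
    simp only [neg_sub]
    refine integral_mem_Icc_of_forall_Ioo hba
      (hG.1.intervalIntegrable.sub intervalIntegrable_const) fun y hy => ?_
    have hGy := hG.le_of_VaR_le hα hy.1.le
    have hFy := hF.lt_of_lt_VaR hα.1 hy.2
    constructor <;> linarith [hM y]
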